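/- arXiv:1302.5954 — 2 statements merged into one kernel-verified Lean document; each statement's English description precedes it below -/
import Mathlib

section
/- Let F : GL(n,F) → ℂ satisfy |F(k₁ a k₂)| ≤ C ∏_{i=1}^n min(a_i,a_i^{-1})^{(n+1)d/2} for all KAK decompositions (d = dim_ℝ F). Then for every p > 0 there exists C_p with |F(k₁ a k₂)| ≤ C_p · e^{-ρ log a} / (1 + ‖log a‖)^p, where e^{-ρ log a} = ∏_i a_i^{d(i-(n+1)/2)} and ‖log a‖ = (∑_i (log a_i)²)^{1/2}. -/
open Finset Matrix

/-!
Write `tᵢ = log aᵢ` and `s = ‖t‖₂`. Then `min(aᵢ, aᵢ⁻¹) = e^{-|tᵢ|}`, and the `i`-th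
`ρ`-exponent `d(i + 1 - (n+1)/2)` has absolute value at most `d(n-1)/2`; since `d ≥ 1` this
leaves a factor `e^{-|tᵢ|}` to spare in each coordinate, so the hypothesis gives
`|F(k₁ a k₂)| ≤ C e^{-ρ log a} e^{-‖t‖₁} ≤ C e^{-ρ log a} e^{-s}`.
Finally `e^{-s}` beats every power of `1 + s`: `(1 + s)^p ≤ N^N e^s` with `N = ⌈p⌉`.
-/

namespace Real

theorem min_self_inv_eq_exp_neg_abs_log {x : ℝ} (hx : 0 < x) :
    min x x⁻¹ = exp (-|log x|) := by
  rcases le_total 1 x with h | h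
  · rw [abs_of_nonneg (log_nonneg h), ← log_inv, exp_log (inv_pos.mpr hx)]
    exact min_eq_right ((inv_le_one₀ hx).mpr h |>.trans h)
  · rw [abs_of_nonpos (log_nonpos hx.le h), neg_neg, exp_log hx]
    exact min_eq_left (h.trans (one_le_inv₀ hx |>.mpr h))

theorem min_self_inv_rpow_le_rpow_mul_exp {x c e : ℝ} (hx : 0 < x) (hce : |c| + 1 ≤ e) :
    min x x⁻¹ ^ e ≤ x ^ c * exp (-|log x|) := by
  rw [min_self_inv_eq_exp_neg_abs_log hx, ← exp_mul, rpow_def_of_pos hx, ← exp_add]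
  refine exp_le_exp.mpr ?_
  have hc : -(|log x| * |c|) ≤ log x * c := by rw [← abs_mul]; exact neg_abs_le _
  have he : |log x| * (|c| + 1) ≤ |log x| * e := mul_le_mul_of_nonneg_left hce (abs_nonneg _)
  linarith

theorem sqrt_sum_sq_le_sum_abs {ι : Type*} (s : Finset ι) (f : ι → ℝ) :
    √(∑ i ∈ s, f i ^ 2) ≤ ∑ i ∈ s, |f i| := by
  refine sqrt_le_iff.mpr ⟨sum_nonneg fun i _ => abs_nonneg _, ?_⟩
  simpa only [sq_abs] using sum_sq_le_sq_sum_of_nonneg (s := s) (f := fun i => |f i|)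
    (fun i _ => abs_nonneg _)

theorem one_add_rpow_le_mul_exp {p s : ℝ} (hp : 0 < p) (hs : 0 ≤ s) :
    (1 + s) ^ p ≤ (⌈p⌉₊ : ℝ) ^ ⌈p⌉₊ * exp s := by
  set N := ⌈p⌉₊
  have hN : (1 : ℝ) ≤ N := by exact_mod_cast Nat.ceil_pos.mpr hp
  have hlin : 1 + s ≤ N * exp (s / N) := by
    have := mul_le_mul_of_nonneg_left (add_one_le_exp (s / N)) (zero_le_one.trans hN)
    rw [mul_add, mul_div_cancel₀ _ (by positivity), mul_one] at this
    linarith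
  calc (1 + s) ^ p ≤ (1 + s) ^ (N : ℝ) :=
        rpow_le_rpow_of_exponent_le (by linarith) (Nat.le_ceil p)
    _ = (1 + s) ^ N := rpow_natCast _ _
    _ ≤ (N * exp (s / N)) ^ N := pow_le_pow_left₀ (by linarith) hlin N
    _ = N ^ N * exp s := by
        rw [mul_pow, ← exp_nat_mul, mul_div_cancel₀ _ (by positivity)]

end Real

open Real

theorem prod_min_self_inv_rpow_le {ι : Type*} [Fintype ι] {x c : ι → ℝ} {e : ℝ}
    (hx : ∀ i, 0 < x i) (hce : ∀ i, |c i| + 1 ≤ e) :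
    ∏ i, min (x i) (x i)⁻¹ ^ e ≤ (∏ i, x i ^ c i) * exp (-√(∑ i, log (x i) ^ 2)) := by
  calc ∏ i, min (x i) (x i)⁻¹ ^ e ≤ ∏ i, x i ^ c i * exp (-|log (x i)|) :=
        prod_le_prod (fun i _ => rpow_nonneg (le_min (hx i).le (inv_pos.mpr (hx i)).le) _)
          fun i _ => min_self_inv_rpow_le_rpow_mul_exp (hx i) (hce i)
    _ = (∏ i, x i ^ c i) * exp (-∑ i, |log (x i)|) := by
        rw [prod_mul_distrib, ← exp_sum, sum_neg_distrib]
    _ ≤ (∏ i, x i ^ c i) * exp (-√(∑ i, log (x i) ^ 2)) :=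
        mul_le_mul_of_nonneg_left (exp_le_exp.mpr (neg_le_neg (sqrt_sum_sq_le_sum_abs _ _)))
          (prod_nonneg fun i _ => (rpow_pos_of_pos (hx i) _).le)

theorem abs_mul_rho_exponent_add_one_le {n : ℕ} (i : Fin n) {d : ℝ} (hd : 1 ≤ d) :
    |d * (((i : ℕ) + 1 : ℝ) - (n + 1 : ℝ) / 2)| + 1 ≤ ((n + 1 : ℝ) * d) / 2 := by
  have hi : ((i : ℕ) : ℝ) + 1 ≤ n := by exact_mod_cast i.isLt
  have hi0 : (0 : ℝ) ≤ (i : ℕ) := Nat.cast_nonneg _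
  rw [abs_mul, abs_of_pos (by linarith)]
  have : |((i : ℕ) + 1 : ℝ) - (n + 1 : ℝ) / 2| ≤ ((n : ℝ) - 1) / 2 :=
    abs_le.mpr ⟨by linarith, by linarith⟩
  nlinarith

theorem KAK_bound_implies_schwartz_decay_general {𝕜 : Type} [RCLike 𝕜] (n : ℕ)
    (F : Matrix (Fin n) (Fin n) 𝕜 → ℂ) (C : ℝ)
    (hF : ∀ k₁ k₂ : Matrix (Fin n) (Fin n) 𝕜,
      k₁ ∈ Matrix.unitaryGroup (Fin n) 𝕜 → k₂ ∈ Matrix.unitaryGroup (Fin n) 𝕜 →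
      ∀ a : Fin n → ℝ, (∀ i, 0 < a i) →
        ‖F (k₁ * Matrix.diagonal (fun i => ((a i : ℝ) : 𝕜)) * k₂)‖ ≤
          C * ∏ i, (min (a i) (a i)⁻¹) ^
            (((n + 1 : ℝ) * (Module.finrank ℝ 𝕜 : ℝ)) / 2)) :
    ∀ p : ℝ, 0 < p → ∃ Cp : ℝ,
      ∀ k₁ k₂ : Matrix (Fin n) (Fin n) 𝕜,
        k₁ ∈ Matrix.unitaryGroup (Fin n) 𝕜 → k₂ ∈ Matrix.unitaryGroup (Fin n) 𝕜 →
        ∀ a : Fin n → ℝ, (∀ i, 0 < a i) →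
          ‖F (k₁ * Matrix.diagonal (fun i => ((a i : ℝ) : 𝕜)) * k₂)‖ ≤
            Cp * (∏ i, (a i) ^ ((Module.finrank ℝ 𝕜 : ℝ) *
                (((i : ℕ) + 1 : ℝ) - (n + 1 : ℝ) / 2))) /
              (1 + Real.sqrt (∑ i, Real.log (a i) ^ 2)) ^ p := by
  intro p hp
  have hd : (1 : ℝ) ≤ Module.finrank ℝ 𝕜 := by
    exact_mod_cast Module.finrank_pos (R := ℝ) (M := 𝕜)
  refine ⟨max C 0 * (⌈p⌉₊ : ℝ) ^ ⌈p⌉₊, fun k₁ k₂ hk₁ hk₂ a ha => ?_⟩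
  set s := √(∑ i, log (a i) ^ 2)
  set P := ∏ i, a i ^ ((Module.finrank ℝ 𝕜 : ℝ) * (((i : ℕ) + 1 : ℝ) - (n + 1 : ℝ) / 2))
  have hP : 0 ≤ P := prod_nonneg fun i _ => (rpow_pos_of_pos (ha i) _).le
  have hdecay :
      ‖F (k₁ * diagonal (fun i => ((a i : ℝ) : 𝕜)) * k₂)‖ ≤ max C 0 * (P * exp (-s)) :=
    (hF k₁ k₂ hk₁ hk₂ a ha).trans <| mul_le_mul (le_max_left _ _)
      (prod_min_self_inv_rpow_le ha fun i => abs_mul_rho_exponent_add_one_le i hd)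
      (prod_nonneg fun i _ => rpow_nonneg (le_min (ha i).le (inv_pos.mpr (ha i)).le) _)
      (le_max_right _ _)
  have hpoly := one_add_rpow_le_mul_exp hp (sqrt_nonneg (∑ i, log (a i) ^ 2))
  rw [le_div_iff₀ (rpow_pos_of_pos (by positivity) _)]
  calc _ ≤ max C 0 * (P * exp (-s)) * ((⌈p⌉₊ : ℝ) ^ ⌈p⌉₊ * exp s) :=
        mul_le_mul hdecay hpoly (by positivity) (by positivity)
    _ = max C 0 * (⌈p⌉₊ : ℝ) ^ ⌈p⌉₊ * P := by
        rw [exp_neg]; field_simp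

/-- If `F : GL(n,F) → ℂ` satisfies `|F(k₁ a k₂)| ≤ C ∏ᵢ min(aᵢ,aᵢ⁻¹)^{(n+1)d/2}` over all
`KAK` decompositions (`d = dim_ℝ F`), then for every `p > 0` there is `C_p` with
`|F(k₁ a k₂)| ≤ C_p e^{-ρ log a} / (1 + ‖log a‖)^p`, where
`e^{-ρ log a} = ∏ᵢ aᵢ^{d(i-(n+1)/2)}` and `‖log a‖ = (∑ᵢ (log aᵢ)²)^{1/2}`. -/
theorem KAK_bound_implies_schwartz_decay {𝕜 : Type} [RCLike 𝕜] (n : ℕ) (hn : 1 ≤ n)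
    (F : Matrix (Fin n) (Fin n) 𝕜 → ℂ) (C : ℝ)
    (hF : ∀ k₁ k₂ : Matrix (Fin n) (Fin n) 𝕜,
      k₁ ∈ Matrix.unitaryGroup (Fin n) 𝕜 → k₂ ∈ Matrix.unitaryGroup (Fin n) 𝕜 →
      ∀ a : Fin n → ℝ, (∀ i, 0 < a i) →
        ‖F (k₁ * Matrix.diagonal (fun i => ((a i : ℝ) : 𝕜)) * k₂)‖ ≤
          C * ∏ i, (min (a i) (a i)⁻¹) ^
            (((n + 1 : ℝ) * (Module.finrank ℝ 𝕜 : ℝ)) / 2)) :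
    ∀ p : ℝ, 0 < p → ∃ Cp : ℝ,
      ∀ k₁ k₂ : Matrix (Fin n) (Fin n) 𝕜,
        k₁ ∈ Matrix.unitaryGroup (Fin n) 𝕜 → k₂ ∈ Matrix.unitaryGroup (Fin n) 𝕜 →
        ∀ a : Fin n → ℝ, (∀ i, 0 < a i) →
          ‖F (k₁ * Matrix.diagonal (fun i => ((a i : ℝ) : 𝕜)) * k₂)‖ ≤
            Cp * (∏ i, (a i) ^ ((Module.finrank ℝ 𝕜 : ℝ) *
                (((i : ℕ) + 1 : ℝ) - (n + 1 : ℝ) / 2))) /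
              (1 + Real.sqrt (∑ i, Real.log (a i) ^ 2)) ^ p :=
  KAK_bound_implies_schwartz_decay_general n F C hF
end

section
/- The map g ↦ (left (n+1)×n block of g) from SL(n+1,F) to M_{(n+1)×n}(F) is continuous, open onto its image (the rank-n matrices), and its fibers are exactly the right cosets gN where N is the subgroup of matrices [[I_n, X],[0,1]]. -/
open Matrix
noncomputable section

variable {𝕜 : Type} [RCLike 𝕜]

instance SLtop (n : ℕ) : TopologicalSpace (Matrix.SpecialLinearGroup (Fin n ⊕ Unit) 𝕜) :=
  TopologicalSpace.induced (fun g => (g : Matrix (Fin n ⊕ Unit) (Fin n ⊕ Unit) 𝕜))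
    inferInstance

/-- `b(g)`: the left `(n+1)×n` block (first `n` columns) of `g ∈ SL(n+1,F)`. -/
def blockMap (n : ℕ) (g : Matrix.SpecialLinearGroup (Fin n ⊕ Unit) 𝕜) :
    Matrix (Fin n ⊕ Unit) (Fin n) 𝕜 :=
  (g : Matrix (Fin n ⊕ Unit) (Fin n ⊕ Unit) 𝕜).submatrix id Sum.inl


/-!
`b(g) = b(g')` says that `g⁻¹ g'` fixes `e₁, …, eₙ`, i.e. it is block upper unitriangular up to
its corner entry, which the determinant forces to be `1`. A matrix `x` of rank `n` becomes
invertible after appending any column `v` outside its column span, and dividing that column by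
the determinant lands in `SL(n+1)`. With `v` frozen to the last column of `g`, this completion is
continuous near `b(g)` and sends `b(g)` back to `g`: a continuous local section of `b` through
every point, so `b` is open.
-/

open Topology Filter

theorem isOpenMap_of_local_sections {X Y : Type*} [TopologicalSpace X] [TopologicalSpace Y]
    {f : X → Y}
    (h : ∀ x, ∃ s : Y → X, ContinuousAt s (f x) ∧ s (f x) = x ∧ f ∘ s =ᶠ[𝓝 (f x)] id) :
    IsOpenMap f :=
  IsOpenMap.of_nhds_le fun x => by
    obtain ⟨s, hs, hsx, hfs⟩ := h x
    calc 𝓝 (f x) = map f (map s (𝓝 (f x))) := by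
          rw [Filter.map_map, map_congr hfs, Filter.map_id]
      _ ≤ map f (𝓝 (s (f x))) := map_mono hs
      _ = map f (𝓝 x) := by rw [hsx]

namespace Matrix

theorem col_fromCols {m ι κ α : Type*} (A : Matrix m ι α) (B : Matrix m κ α) :
    (fromCols A B).col = Sum.elim A.col B.col := by
  ext (j | j) i <;> rfl

theorem toCols₁_mul {l m ι κ α : Type*} [Fintype m] [Mul α] [AddCommMonoid α]
    (A : Matrix l m α) (B : Matrix m (ι ⊕ κ) α) : (A * B).toCols₁ = A * B.toCols₁ :=
  rfl

section CommRing

variable {ι κ R : Type*} [Fintype ι] [Fintype κ] [DecidableEq ι] [DecidableEq κ] [CommRing R]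

theorem toCols₁_mul_eq_toCols₁_iff {A : Matrix (ι ⊕ κ) (ι ⊕ κ) R} (hA : IsUnit A)
    (B : Matrix (ι ⊕ κ) (ι ⊕ κ) R) :
    (A * B).toCols₁ = A.toCols₁ ↔ B.toCols₁ = (1 : Matrix (ι ⊕ κ) (ι ⊕ κ) R).toCols₁ := by
  have := hA.invertible
  rw [toCols₁_mul, show A.toCols₁ = A * (1 : Matrix (ι ⊕ κ) (ι ⊕ κ) R).toCols₁ by
    rw [← toCols₁_mul, mul_one]]
  exact mul_right_inj_of_invertible A

theorem exists_eq_fromBlocks_iff_toCols₁_eq_one {B : Matrix (ι ⊕ Unit) (ι ⊕ Unit) R}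
    (hB : B.det = 1) :
    (∃ X : ι → R, B = fromBlocks 1 (of fun i _ => X i) 0 1) ↔
      B.toCols₁ = (1 : Matrix (ι ⊕ Unit) (ι ⊕ Unit) R).toCols₁ := by
  constructor
  · rintro ⟨X, rfl⟩
    ext (i | i) j <;> simp [toCols₁, one_apply]
  · intro h
    have h₁₁ : B.toBlocks₁₁ = 1 := by
      ext i j; simpa [toCols₁, toBlocks₁₁, one_apply] using congr_fun₂ h (Sum.inl i) j
    have h₂₁ : B.toBlocks₂₁ = 0 := by
      ext i j; simpa [toCols₁, toBlocks₂₁] using congr_fun₂ h (Sum.inr i) j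
    have h₂₂ : B.toBlocks₂₂ = 1 := by
      rw [← fromBlocks_toBlocks B, h₁₁, h₂₁, det_fromBlocks_zero₂₁, det_one, one_mul,
        det_unique] at hB
      ext ⟨⟩ ⟨⟩; exact hB
    refine ⟨fun i => B (Sum.inl i) (Sum.inr ()), ?_⟩
    rw [← fromBlocks_toBlocks B, h₁₁, h₂₁, h₂₂]
    ext (i | i) (j | j) <;> rfl

end CommRing

section Field

variable {ι K : Type*} [Fintype ι] [Field K]

theorem rank_eq_card_iff_linearIndependent_col {m : Type*} [Fintype m] (A : Matrix m ι K) :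
    A.rank = Fintype.card ι ↔ LinearIndependent K A.col := by
  rw [rank_eq_finrank_span_cols, linearIndependent_iff_card_eq_finrank_span, eq_comm, Set.finrank]

variable [DecidableEq ι]

theorem rank_toCols₁_of_isUnit {κ : Type*} [Fintype κ] [DecidableEq κ]
    {A : Matrix (ι ⊕ κ) (ι ⊕ κ) K} (hA : IsUnit A) : A.toCols₁.rank = Fintype.card ι := by
  rw [rank_eq_card_iff_linearIndependent_col]
  exact (linearIndependent_cols_iff_isUnit.mpr hA).comp Sum.inl Sum.inl_injective

theorem exists_isUnit_fromCols_of_rank_eq_card (x : Matrix (ι ⊕ Unit) ι K)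
    (hx : x.rank = Fintype.card ι) : ∃ w : Matrix (ι ⊕ Unit) Unit K, IsUnit (fromCols x w) := by
  have hli := (rank_eq_card_iff_linearIndependent_col x).mp hx
  have hspan : Submodule.span K (Set.range x.col) ≠ ⊤ := by
    intro htop
    have := finrank_span_eq_card hli
    rw [htop, finrank_top, Module.finrank_fintype_fun_eq_card, Fintype.card_sum,
      Fintype.card_unit] at this
    omega
  obtain ⟨v, -, hv⟩ := SetLike.exists_of_lt hspan.lt_top
  have hv0 : v ≠ 0 := fun h => hv (h ▸ Submodule.zero_mem _)
  refine ⟨replicateCol Unit v, ?_⟩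
  rw [← linearIndependent_cols_iff_isUnit, col_fromCols, linearIndependent_sum]
  refine ⟨hli, linearIndependent_unique_iff.mpr hv0, ?_⟩
  simp only [Sum.elim_comp_inr, Set.range_unique]
  exact (Submodule.disjoint_span_singleton' hv0).mpr hv

end Field

namespace SpecialLinearGroup

section CommRing

variable {ι R : Type*} [Fintype ι] [DecidableEq ι] [CommRing R]

theorem isUnit_coe (g : SpecialLinearGroup ι R) : IsUnit (g : Matrix ι ι R) :=
  (isUnit_iff_isUnit_det _).mpr (by simp)

/-- The paper's subgroup `N = {[[1, X], [0, 1]]}`, as a set. -/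
def lastColUnipotent : Set (SpecialLinearGroup (ι ⊕ Unit) R) :=
  {h | ∃ X : ι → R, (h : Matrix (ι ⊕ Unit) (ι ⊕ Unit) R) = fromBlocks 1 (of fun i _ => X i) 0 1}

theorem toCols₁_eq_toCols₁_iff (g g' : SpecialLinearGroup (ι ⊕ Unit) R) :
    (g : Matrix (ι ⊕ Unit) (ι ⊕ Unit) R).toCols₁ =
        (g' : Matrix (ι ⊕ Unit) (ι ⊕ Unit) R).toCols₁ ↔
      ∃ h ∈ lastColUnipotent, g' = g * h := by
  have hcoset : (∃ h ∈ lastColUnipotent, g' = g * h) ↔ g⁻¹ * g' ∈ lastColUnipotent :=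
    ⟨fun ⟨h, hN, hg'⟩ => by rwa [hg', inv_mul_cancel_left],
      fun hN => ⟨_, hN, (mul_inv_cancel_left g g').symm⟩⟩
  rw [hcoset, lastColUnipotent, Set.mem_ofPred_eq,
    exists_eq_fromBlocks_iff_toCols₁_eq_one (g⁻¹ * g').det_coe,
    ← toCols₁_mul_eq_toCols₁_iff (isUnit_coe g), ← coe_mul, mul_inv_cancel_left, eq_comm]

end CommRing

section Field

variable {ι K : Type*} [Fintype ι] [DecidableEq ι] [Field K]

open Classical in
/-- `A` with its last column divided by `det A`; the junk value `1` is taken when `A` is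
singular. -/
def normalizeLastCol (A : Matrix (ι ⊕ Unit) (ι ⊕ Unit) K) : SpecialLinearGroup (ι ⊕ Unit) K :=
  if h : A.det = 0 then 1
  else (⟨A * diagonal (Sum.elim (fun _ => 1) fun _ => A.det⁻¹), by
    simp [det_diagonal, Fintype.prod_sum_type, h]⟩ : SpecialLinearGroup (ι ⊕ Unit) K)

theorem coe_normalizeLastCol {A : Matrix (ι ⊕ Unit) (ι ⊕ Unit) K} (h : A.det ≠ 0) :
    (normalizeLastCol A : Matrix (ι ⊕ Unit) (ι ⊕ Unit) K) =
      A * diagonal (Sum.elim (fun _ => 1) fun _ => A.det⁻¹) :=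
  congrArg Subtype.val (dif_neg h)

theorem toCols₁_normalizeLastCol {A : Matrix (ι ⊕ Unit) (ι ⊕ Unit) K} (h : A.det ≠ 0) :
    (normalizeLastCol A : Matrix (ι ⊕ Unit) (ι ⊕ Unit) K).toCols₁ = A.toCols₁ := by
  ext i j
  simp [coe_normalizeLastCol h, toCols₁, mul_diagonal]

theorem normalizeLastCol_coe (g : SpecialLinearGroup (ι ⊕ Unit) K) :
    normalizeLastCol (g : Matrix (ι ⊕ Unit) (ι ⊕ Unit) K) = g := by
  ext i (j | j) <;> simp [coe_normalizeLastCol]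

theorem continuousAt_coe_normalizeLastCol [TopologicalSpace K] [IsTopologicalDivisionRing K]
    [T1Space K] {A : Matrix (ι ⊕ Unit) (ι ⊕ Unit) K} (h : A.det ≠ 0) :
    ContinuousAt (fun B => (normalizeLastCol B : Matrix (ι ⊕ Unit) (ι ⊕ Unit) K)) A := by
  have hdet : Continuous (det : Matrix (ι ⊕ Unit) (ι ⊕ Unit) K → K) := continuous_id.matrix_det
  have hscale : Continuous fun p : Matrix (ι ⊕ Unit) (ι ⊕ Unit) K × K =>
      p.1 * diagonal (Sum.elim (fun _ => 1) fun _ => p.2) :=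
    continuous_fst.matrix_mul (continuous_pi fun k => by
      rcases k with k | k
      exacts [continuous_const, continuous_snd]).matrix_diagonal
  refine ContinuousAt.congr (hscale.continuousAt.comp
    (continuousAt_id.prodMk (hdet.continuousAt.inv₀ h))) ?_
  filter_upwards [hdet.continuousAt.eventually_ne h] with B hB
  exact (coe_normalizeLastCol hB).symm

theorem range_toCols₁ :
    Set.range (fun g : SpecialLinearGroup (ι ⊕ Unit) K =>
      (g : Matrix (ι ⊕ Unit) (ι ⊕ Unit) K).toCols₁) = {x | x.rank = Fintype.card ι} := by
  ext x
  constructor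
  · rintro ⟨g, rfl⟩
    exact rank_toCols₁_of_isUnit (isUnit_coe g)
  · intro hx
    obtain ⟨w, hw⟩ := exists_isUnit_fromCols_of_rank_eq_card x hx
    have hdet : (fromCols x w).det ≠ 0 := ((isUnit_iff_isUnit_det _).mp hw).ne_zero
    exact ⟨normalizeLastCol (fromCols x w), toCols₁_normalizeLastCol hdet⟩

end Field

end SpecialLinearGroup

end Matrix

open Matrix.SpecialLinearGroup

theorem isInducing_coe_specialLinearGroup (n : ℕ) :
    IsInducing (fun g : SpecialLinearGroup (Fin n ⊕ Unit) 𝕜 =>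
      (g : Matrix (Fin n ⊕ Unit) (Fin n ⊕ Unit) 𝕜)) :=
  ⟨rfl⟩

theorem continuous_blockMap (n : ℕ) : Continuous (blockMap (𝕜 := 𝕜) n) :=
  (isInducing_coe_specialLinearGroup n).continuous.matrix_submatrix id Sum.inl

theorem isOpenMap_blockMap (n : ℕ) : IsOpenMap (blockMap (𝕜 := 𝕜) n) := by
  refine isOpenMap_of_local_sections fun g => ?_
  set w := (g : Matrix (Fin n ⊕ Unit) (Fin n ⊕ Unit) 𝕜).toCols₂
  have hg : fromCols (blockMap n g) w = g := fromCols_toCols _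
  have hfrom : Continuous fun x : Matrix (Fin n ⊕ Unit) (Fin n) 𝕜 => fromCols x w :=
    continuous_matrix fun i j => by
      rcases j with j | j
      exacts [continuous_id.matrix_elem i j, continuous_const]
  have hdet : (fromCols (blockMap n g) w).det ≠ 0 := by simp [hg]
  refine ⟨fun x => normalizeLastCol (fromCols x w), ?_,
    by simp only [hg, normalizeLastCol_coe], ?_⟩
  · exact (isInducing_coe_specialLinearGroup n).continuousAt_iff.mpr
      ((continuousAt_coe_normalizeLastCol hdet).comp (f := fun x => fromCols x w)
        hfrom.continuousAt)
  · filter_upwards [hfrom.matrix_det.continuousAt.eventually_ne hdet] with x hx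
    exact toCols₁_normalizeLastCol hx

theorem blockMap_continuous_open_fibers_general (n : ℕ) :
    Continuous (blockMap (𝕜 := 𝕜) n) ∧
      IsOpenMap (Set.rangeFactorization (blockMap (𝕜 := 𝕜) n)) ∧
      Set.range (blockMap (𝕜 := 𝕜) n) =
        {x : Matrix (Fin n ⊕ Unit) (Fin n) 𝕜 | x.rank = n} ∧
      ∀ g g' : Matrix.SpecialLinearGroup (Fin n ⊕ Unit) 𝕜,
        blockMap n g = blockMap n g' ↔
          ∃ h : Matrix.SpecialLinearGroup (Fin n ⊕ Unit) 𝕜,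
            (∃ X : Fin n → 𝕜,
              (h : Matrix (Fin n ⊕ Unit) (Fin n ⊕ Unit) 𝕜) =
                Matrix.fromBlocks 1 (Matrix.of fun i (_ : Unit) => X i) 0 1) ∧
            g' = g * h := by
  refine ⟨continuous_blockMap n, (isOpenMap_blockMap n).subtype_mk _, ?_,
    fun g g' => toCols₁_eq_toCols₁_iff g g'⟩
  exact range_toCols₁.trans (by rw [Fintype.card_fin])

/-- The map `g ↦ (first n columns of g)` from `SL(n+1,F)` to `M_{(n+1)×n}(F)` is
continuous, open onto its image (the rank-`n` matrices), and its fibers are exactly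
the right cosets `gN`, `N = {[[Iₙ,X],[0,1]]}`. -/
theorem blockMap_continuous_open_fibers (n : ℕ) (hn : 1 ≤ n) :
    Continuous (blockMap (𝕜 := 𝕜) n) ∧
      IsOpenMap (Set.rangeFactorization (blockMap (𝕜 := 𝕜) n)) ∧
      Set.range (blockMap (𝕜 := 𝕜) n) =
        {x : Matrix (Fin n ⊕ Unit) (Fin n) 𝕜 | x.rank = n} ∧
      ∀ g g' : Matrix.SpecialLinearGroup (Fin n ⊕ Unit) 𝕜,
        blockMap n g = blockMap n g' ↔
          ∃ h : Matrix.SpecialLinearGroup (Fin n ⊕ Unit) 𝕜,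
            (∃ X : Fin n → 𝕜,
              (h : Matrix (Fin n ⊕ Unit) (Fin n ⊕ Unit) 𝕜) =
                Matrix.fromBlocks 1 (Matrix.of fun i (_ : Unit) => X i) 0 1) ∧
            g' = g * h :=
  blockMap_continuous_open_fibers_general n
end
end
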